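/- arXiv:2206.05499 — 4 statements merged into one kernel-verified Lean document; each statement's English description precedes it below -/
import Mathlib

section
/- Lemma 1 (subgraph extraction by mask assignment). Let S ⊆ V and suppose the mask values satisfy: m_v^(k) = 1 for every v ∈ S and every k ∈ {1,…,K}; and m_v^(k) = 0 for every odd k ∈ {1,…,K} and every v ∈ V \ S that has at least one neighbor in S (the mask values of all other pairs (v,k) may take arbitrary values in [0,1]). Then h_v^(K) = t_v^(K) for every v ∈ S; that is, on S the K-layer soft-mask GNN on G computes exactly the node representations of the K-layer GNN run on the induced subgraph G_S with all masks equal to 1. -/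
open Finset

/-- Componentwise ReLU on real vectors. -/
noncomputable def relu {ι : Type*} (x : ι → ℝ) : ι → ℝ := fun i => max (x i) 0

/-- The soft-mask GNN (SMG) recursion on a graph `G`:
`h_v^(0) = x_v` and
`h_v^(k) = ReLU( m_v^(k) • ( W₁^(k) h_v^(k-1) + Σ_{u ∈ N_G(v)} m_u^(k) • W₂^(k) h_u^(k-1) ) )`. -/
noncomputable def smg {V : Type*} [Fintype V] [DecidableEq V] {d : ℕ}
    (G : SimpleGraph V) [DecidableRel G.Adj]
    (x : V → Fin d → ℝ) (W1 W2 : ℕ → Matrix (Fin d) (Fin d) ℝ)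
    (m : ℕ → V → ℝ) : ℕ → V → Fin d → ℝ
  | 0 => x
  | k + 1 => fun v =>
      relu (m (k + 1) v •
        ((W1 (k + 1)).mulVec (smg G x W1 W2 m k v) +
          ∑ u ∈ G.neighborFinset v, m (k + 1) u • (W2 (k + 1)).mulVec (smg G x W1 W2 m k u)))

/-- The same recursion run on the induced subgraph `G_S` with all masks equal to `1`:
`t_v^(0) = x_v` and
`t_v^(k) = ReLU( W₁^(k) t_v^(k-1) + Σ_{u ∈ N_{G_S}(v)} W₂^(k) t_u^(k-1) )`,
where for `v ∈ S` the neighborhood of `v` in `G_S` is `{u ∈ N_G(v) : u ∈ S}`. -/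
noncomputable def smgSub {V : Type*} [Fintype V] [DecidableEq V] {d : ℕ}
    (G : SimpleGraph V) [DecidableRel G.Adj] (S : Finset V)
    (x : V → Fin d → ℝ) (W1 W2 : ℕ → Matrix (Fin d) (Fin d) ℝ) : ℕ → V → Fin d → ℝ
  | 0 => x
  | k + 1 => fun v =>
      relu ((W1 (k + 1)).mulVec (smgSub G S x W1 W2 k v) +
          ∑ u ∈ (G.neighborFinset v).filter (· ∈ S),
            (W2 (k + 1)).mulVec (smgSub G S x W1 W2 k u))

/-- **Lemma 1** (subgraph extraction by mask assignment). -/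
theorem lemma1_subgraph_extraction
    {V : Type*} [Fintype V] [DecidableEq V] {d K : ℕ} (hd : 1 ≤ d) (hK : 1 ≤ K)
    (G : SimpleGraph V) [DecidableRel G.Adj]
    (x : V → Fin d → ℝ) (W1 W2 : ℕ → Matrix (Fin d) (Fin d) ℝ)
    (S : Finset V) (m : ℕ → V → ℝ)
    (hm01 : ∀ k v, 1 ≤ k → k ≤ K → 0 ≤ m k v ∧ m k v ≤ 1)
    (hmS : ∀ v ∈ S, ∀ k, 1 ≤ k → k ≤ K → m k v = 1)
    (hm0 : ∀ v, v ∉ S → (∃ u ∈ G.neighborFinset v, u ∈ S) →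
      ∀ k, 1 ≤ k → k ≤ K → Odd k → m k v = 0) :
    ∀ v ∈ S, smg G x W1 W2 m K v = smgSub G S x W1 W2 K v := by
  have relu0 : relu (0 : Fin d → ℝ) = 0 := by
    funext i; simp [relu]
  have main : ∀ k, k ≤ K →
      (∀ v ∈ S, smg G x W1 W2 m k v = smgSub G S x W1 W2 k v) ∧
      (∀ u, u ∉ S → (∃ w ∈ G.neighborFinset u, w ∈ S) → Odd k →
        smg G x W1 W2 m k u = 0) := by
    intro k
    induction k with
    | zero =>
      intro _
      refine ⟨fun v _ => rfl, fun u _ _ hodd => ?_⟩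
      exact absurd hodd (by simp)
    | succ k ih =>
      intro hkK
      obtain ⟨ihS, ihB⟩ := ih (Nat.le_of_succ_le hkK)
      constructor
      · intro v hv
        have hmv : m (k + 1) v = 1 := hmS v hv (k + 1) (Nat.succ_le_succ (Nat.zero_le k)) hkK
        show relu _ = relu _
        congr 1
        rw [hmv, one_smul, ihS v hv]
        congr 1
        rw [← Finset.sum_filter_add_sum_filter_not (G.neighborFinset v) (· ∈ S)]
        have h2 : ∑ u ∈ (G.neighborFinset v).filter (fun u => ¬ u ∈ S),
            m (k + 1) u • (W2 (k + 1)).mulVec (smg G x W1 W2 m k u) = 0 := by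
          apply Finset.sum_eq_zero
          intro u hu
          rw [Finset.mem_filter] at hu
          obtain ⟨hadj, huS⟩ := hu
          have hEx : ∃ w ∈ G.neighborFinset u, w ∈ S :=
            ⟨v, by rw [SimpleGraph.mem_neighborFinset] at hadj ⊢; exact hadj.symm, hv⟩
          rcases Nat.even_or_odd (k + 1) with he | ho
          · have hk : Odd k := Nat.not_even_iff_odd.mp (Nat.even_add_one.mp he)
            rw [ihB u huS hEx hk, Matrix.mulVec_zero, smul_zero]
          · rw [hm0 u huS hEx (k + 1) (Nat.succ_le_succ (Nat.zero_le k)) hkK ho, zero_smul]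
        rw [h2, add_zero]
        have h3 : ∑ u ∈ (G.neighborFinset v).filter (· ∈ S),
            m (k + 1) u • (W2 (k + 1)).mulVec (smg G x W1 W2 m k u) =
            ∑ u ∈ (G.neighborFinset v).filter (· ∈ S),
            (W2 (k + 1)).mulVec (smgSub G S x W1 W2 k u) := by
          apply Finset.sum_congr rfl
          intro u hu
          rw [Finset.mem_filter] at hu
          rw [hmS u hu.2 (k + 1) (Nat.succ_le_succ (Nat.zero_le k)) hkK, one_smul,
            ihS u hu.2]
        rw [h3]
      · intro u huS hEx hodd
        show relu _ = 0
        rw [hm0 u huS hEx (k + 1) (Nat.succ_le_succ (Nat.zero_le k)) hkK hodd, zero_smul,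
          relu0]
  exact (main K le_rfl).1
end

section
/- Theorem 1 (graph-level subgraph representation). For every subset S ⊆ V there exists an assignment of mask values m_v^(k) ∈ [0,1] (v ∈ V, k ∈ {1,…,K}) such that Σ_{v ∈ V} h_v^(K) = Σ_{v ∈ S} t_v^(K); that is, the SUM readout of the K-layer soft-mask GNN on G with these masks equals the SUM readout of the K-layer GNN run on the induced subgraph G_S with all masks equal to 1. -/
open Finset

/-!
Mask every vertex of `S` by `1` and every other vertex by `0`, in every layer. A vertex outside
`S` then has output `ReLU 0 = 0` in every layer `k ≥ 1`, and it contributes nothing to the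
aggregation at its neighbours; so on `S` the masked recursion is exactly the recursion on `G_S`,
and after at least one layer the sum over `V` reduces to the sum over `S`.
-/

lemma relu_zero {ι : Type*} : relu (0 : ι → ℝ) = 0 := by
  funext i
  simp [relu]

section IndicatorMask

variable {V : Type*} [DecidableEq V]

def indicatorMask (S : Finset V) : ℕ → V → ℝ := fun _ v => if v ∈ S then 1 else 0

lemma indicatorMask_mem_Icc (S : Finset V) (k : ℕ) (v : V) :
    indicatorMask S k v ∈ Set.Icc (0 : ℝ) 1 := by
  unfold indicatorMask
  split_ifs <;> simp

lemma sum_indicatorMask_smul {M : Type*} [AddCommMonoid M] [Module ℝ M]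
    (S s : Finset V) (k : ℕ) (f : V → M) :
    ∑ u ∈ s, indicatorMask S k u • f u = ∑ u ∈ s.filter (· ∈ S), f u := by
  simp only [indicatorMask, ite_smul, one_smul, zero_smul, sum_filter]

end IndicatorMask

section SoftMaskGNN

variable {V : Type*} [Fintype V] [DecidableEq V] {d : ℕ}
  (G : SimpleGraph V) [DecidableRel G.Adj]
  (x : V → Fin d → ℝ) (W1 W2 : ℕ → Matrix (Fin d) (Fin d) ℝ)

lemma smg_succ_eq_zero_of_mask_eq_zero {m : ℕ → V → ℝ} {k : ℕ} {v : V}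
    (hm : m (k + 1) v = 0) : smg G x W1 W2 m (k + 1) v = 0 := by
  simp only [smg, hm, zero_smul, relu_zero]

lemma smg_indicatorMask_eq_smgSub (S : Finset V) (k : ℕ) :
    ∀ v ∈ S, smg G x W1 W2 (indicatorMask S) k v = smgSub G S x W1 W2 k v := by
  induction k with
  | zero => exact fun _ _ => rfl
  | succ k ih =>
    intro v hv
    have hmask : indicatorMask S (k + 1) v = 1 := if_pos hv
    simp only [smg, smgSub]
    rw [hmask, one_smul, ih v hv, sum_indicatorMask_smul]
    congr 2
    exact sum_congr rfl fun u hu => by rw [ih u (mem_filter.mp hu).2]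

lemma sum_smg_indicatorMask_succ (S : Finset V) (k : ℕ) :
    ∑ v, smg G x W1 W2 (indicatorMask S) (k + 1) v = ∑ v ∈ S, smgSub G S x W1 W2 (k + 1) v := by
  rw [← sum_subset (subset_univ S) fun v _ hv =>
    smg_succ_eq_zero_of_mask_eq_zero G x W1 W2 (if_neg hv)]
  exact sum_congr rfl (smg_indicatorMask_eq_smgSub G x W1 W2 S (k + 1))

end SoftMaskGNN

theorem theorem1_graph_level_subgraph_representation_general
    {V : Type*} [Fintype V] [DecidableEq V] {d K : ℕ} (hK : 1 ≤ K)
    (G : SimpleGraph V) [DecidableRel G.Adj]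
    (x : V → Fin d → ℝ) (W1 W2 : ℕ → Matrix (Fin d) (Fin d) ℝ)
    (S : Finset V) :
    ∃ m : ℕ → V → ℝ,
      (∀ k v, 1 ≤ k → k ≤ K → 0 ≤ m k v ∧ m k v ≤ 1) ∧
      ∑ v, smg G x W1 W2 m K v = ∑ v ∈ S, smgSub G S x W1 W2 K v := by
  obtain ⟨K, rfl⟩ := Nat.exists_eq_add_of_le' hK
  exact ⟨indicatorMask S, fun k v _ _ => indicatorMask_mem_Icc S k v,
    sum_smg_indicatorMask_succ G x W1 W2 S K⟩

/-- **Theorem 1** (graph-level subgraph representation): for every subset `S ⊆ V` there is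
a mask assignment with values in `[0,1]` such that the SUM readout of the `K`-layer
soft-mask GNN on `G` equals the SUM readout of the `K`-layer GNN run on `G_S` with all
masks equal to `1`. -/
theorem theorem1_graph_level_subgraph_representation
    {V : Type*} [Fintype V] [DecidableEq V] {d K : ℕ} (hd : 1 ≤ d) (hK : 1 ≤ K)
    (G : SimpleGraph V) [DecidableRel G.Adj]
    (x : V → Fin d → ℝ) (W1 W2 : ℕ → Matrix (Fin d) (Fin d) ℝ)
    (S : Finset V) :
    ∃ m : ℕ → V → ℝ,
      (∀ k v, 1 ≤ k → k ≤ K → 0 ≤ m k v ∧ m k v ≤ 1) ∧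
      ∑ v, smg G x W1 W2 m K v = ∑ v ∈ S, smgSub G S x W1 W2 K v :=
  theorem1_graph_level_subgraph_representation_general hK G x W1 W2 S
end

section
/- Explicit mask assignment realizing Theorem 1. Let S ⊆ V and suppose the mask values satisfy: m_v^(k) = 1 for every v ∈ S and every k ∈ {1,…,K}; and m_v^(k) = 0 for every v ∈ V \ S such that either (v has at least one neighbor in S and k is odd) or k = K (the mask values of all other pairs (v,k) may take arbitrary values in [0,1]). Then h_v^(K) = 0 for every v ∈ V \ S, h_v^(K) = t_v^(K) for every v ∈ S, and consequently Σ_{v ∈ V} h_v^(K) = Σ_{v ∈ S} t_v^(K). -/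
open Finset

/-- **Explicit mask assignment realizing Theorem 1**: with masks equal to `1` on `S` at
every layer, and equal to `0` off `S` whenever (the vertex has a neighbor in `S` and the
layer is odd) or the layer is the last one, the soft-mask GNN vanishes off `S` at layer
`K`, agrees with the subgraph computation on `S`, and the SUM readouts coincide. -/
theorem explicit_mask_assignment_theorem1
    {V : Type*} [Fintype V] [DecidableEq V] {d K : ℕ} (hd : 1 ≤ d) (hK : 1 ≤ K)
    (G : SimpleGraph V) [DecidableRel G.Adj]
    (x : V → Fin d → ℝ) (W1 W2 : ℕ → Matrix (Fin d) (Fin d) ℝ)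
    (S : Finset V) (m : ℕ → V → ℝ)
    (hm01 : ∀ k v, 1 ≤ k → k ≤ K → 0 ≤ m k v ∧ m k v ≤ 1)
    (hmS : ∀ v ∈ S, ∀ k, 1 ≤ k → k ≤ K → m k v = 1)
    (hm0 : ∀ v, v ∉ S → ∀ k, 1 ≤ k → k ≤ K →
      (((∃ u ∈ G.neighborFinset v, u ∈ S) ∧ Odd k) ∨ k = K) → m k v = 0) :
    (∀ v, v ∉ S → smg G x W1 W2 m K v = 0) ∧
    (∀ v ∈ S, smg G x W1 W2 m K v = smgSub G S x W1 W2 K v) ∧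
    ∑ v, smg G x W1 W2 m K v = ∑ v ∈ S, smgSub G S x W1 W2 K v := by
  have relu0 : relu (0 : Fin d → ℝ) = 0 := by
    funext i; simp [relu]
  -- off-S vertices with a neighbor in S vanish at odd layers
  have hodd : ∀ k, 1 ≤ k → k ≤ K → Odd k → ∀ u, u ∉ S →
      (∃ w ∈ G.neighborFinset u, w ∈ S) → smg G x W1 W2 m k u = 0 := by
    intro k hk1 hkK hko u hu hnb
    obtain ⟨k, rfl⟩ := Nat.exists_eq_add_of_le hk1
    have : m (1 + k) u = 0 := hm0 u hu (1 + k) hk1 hkK (Or.inl ⟨hnb, hko⟩)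
    rw [add_comm] at this ⊢
    simp [smg, this, relu0]
  have key : ∀ k, k ≤ K → ∀ v ∈ S, smg G x W1 W2 m k v = smgSub G S x W1 W2 k v := by
    intro k
    induction k with
    | zero => intro _ v _; simp [smg, smgSub]
    | succ k ih =>
      intro hk v hv
      have hk' : k ≤ K := Nat.le_of_succ_le hk
      have hm1 : m (k + 1) v = 1 := hmS v hv (k + 1) (Nat.succ_le_succ (Nat.zero_le k)) hk
      simp only [smg, smgSub, hm1, one_smul]
      congr 1
      rw [ih hk' v hv]
      congr 1
      rw [← Finset.sum_filter_add_sum_filter_not (G.neighborFinset v) (· ∈ S)]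
      have h1 : ∑ u ∈ (G.neighborFinset v).filter (· ∈ S),
          m (k + 1) u • (W2 (k + 1)).mulVec (smg G x W1 W2 m k u)
          = ∑ u ∈ (G.neighborFinset v).filter (· ∈ S),
          (W2 (k + 1)).mulVec (smgSub G S x W1 W2 k u) := by
        refine Finset.sum_congr rfl ?_
        intro u hu
        have huS : u ∈ S := (Finset.mem_filter.mp hu).2
        rw [hmS u huS (k + 1) (Nat.succ_le_succ (Nat.zero_le k)) hk, one_smul,
          ih hk' u huS]
      have h2 : ∑ u ∈ (G.neighborFinset v).filter (fun u => ¬ u ∈ S),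
          m (k + 1) u • (W2 (k + 1)).mulVec (smg G x W1 W2 m k u) = 0 := by
        refine Finset.sum_eq_zero ?_
        intro u hu
        have huN : u ∈ G.neighborFinset v := (Finset.mem_filter.mp hu).1
        have huS : u ∉ S := (Finset.mem_filter.mp hu).2
        have hvnb : v ∈ G.neighborFinset u := by
          rw [SimpleGraph.mem_neighborFinset] at huN ⊢
          exact huN.symm
        rcases Nat.even_or_odd (k + 1) with he | ho
        · -- k+1 even, so k is odd and k ≥ 1
          have hko : Odd k := (Nat.not_even_iff_odd.mp (Nat.even_add_one.mp he))
          have hk1 : 1 ≤ k := hko.pos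
          rw [hodd k hk1 hk' hko u huS ⟨v, hvnb, hv⟩, Matrix.mulVec_zero, smul_zero]
        · rw [hm0 u huS (k + 1) (Nat.succ_le_succ (Nat.zero_le k)) hk
            (Or.inl ⟨⟨v, hvnb, hv⟩, ho⟩), zero_smul]
      rw [h1, h2, add_zero]
  have hzero : ∀ v, v ∉ S → smg G x W1 W2 m K v = 0 := by
    intro v hv
    obtain ⟨k, rfl⟩ := Nat.exists_eq_add_of_le hK
    have hm : m (1 + k) v = 0 := hm0 v hv (1 + k) (Nat.le_add_right 1 k) le_rfl (Or.inr rfl)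
    rw [add_comm] at hm ⊢
    simp [smg, hm, relu0]
  refine ⟨hzero, fun v hv => key K le_rfl v hv, ?_⟩
  rw [← Finset.sum_subset (Finset.subset_univ S) (fun v _ hv => hzero v hv)]
  exact Finset.sum_congr rfl (fun v hv => key K le_rfl v hv)
end

section
/- Inductive step of Lemma 1 (single-layer propagation). Let S ⊆ V and fix a layer k ∈ {1,…,K}. Suppose: (i) h_v^(k-1) = t_v^(k-1) for every v ∈ S; (ii) m_v^(k) = 1 for every v ∈ S; and (iii) for every u ∈ V \ S that has at least one neighbor in S, either m_u^(k) = 0 or h_u^(k-1) = 0. Then h_v^(k) = t_v^(k) for every v ∈ S. (The two alternatives in (iii) correspond to the cases of k odd, where the lemma's mask condition gives m_u^(k) = 0, and k even, where m_u^(k-1) = 0 forces h_u^(k-1) = 0.) -/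
open Finset

/-- **Inductive step of Lemma 1** (single-layer propagation): if at layer `k - 1` the
soft-mask GNN agrees with the subgraph computation on `S`, the layer-`k` masks are `1`
on `S`, and every vertex outside `S` with a neighbor in `S` has either zero layer-`k`
mask or zero layer-`(k-1)` representation, then at layer `k` the soft-mask GNN still
agrees with the subgraph computation on `S`. -/
theorem lemma1_inductive_step
    {V : Type*} [Fintype V] [DecidableEq V] {d K : ℕ} (hd : 1 ≤ d) (hK : 1 ≤ K)
    (G : SimpleGraph V) [DecidableRel G.Adj]
    (x : V → Fin d → ℝ) (W1 W2 : ℕ → Matrix (Fin d) (Fin d) ℝ)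
    (S : Finset V) (m : ℕ → V → ℝ)
    (hm01 : ∀ k v, 1 ≤ k → k ≤ K → 0 ≤ m k v ∧ m k v ≤ 1)
    (k : ℕ) (hk1 : 1 ≤ k) (hkK : k ≤ K)
    (ih : ∀ v ∈ S, smg G x W1 W2 m (k - 1) v = smgSub G S x W1 W2 (k - 1) v)
    (hmS : ∀ v ∈ S, m k v = 1)
    (hout : ∀ u, u ∉ S → (∃ w ∈ G.neighborFinset u, w ∈ S) →
      m k u = 0 ∨ smg G x W1 W2 m (k - 1) u = 0) :
    ∀ v ∈ S, smg G x W1 W2 m k v = smgSub G S x W1 W2 k v := by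
  obtain ⟨n, rfl⟩ : ∃ n, k = n + 1 := ⟨k - 1, (Nat.succ_pred_eq_of_pos hk1).symm⟩
  simp only [Nat.add_sub_cancel] at ih hout
  intro v hv
  show relu _ = relu _
  refine congrArg relu ?_
  rw [hmS v hv, one_smul, ih v hv]
  congr 1
  have split := Finset.sum_filter_add_sum_filter_not (G.neighborFinset v) (· ∈ S)
    (fun u => m (n+1) u • (W2 (n+1)).mulVec (smg G x W1 W2 m n u))
  have h2 : ∑ u ∈ (G.neighborFinset v).filter (fun u => ¬ u ∈ S),
      m (n+1) u • (W2 (n+1)).mulVec (smg G x W1 W2 m n u) = 0 := by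
    refine Finset.sum_eq_zero fun u hu => ?_
    simp only [Finset.mem_filter] at hu
    rcases hout u hu.2 ⟨v, by simpa [SimpleGraph.mem_neighborFinset] using
      (G.adj_symm (by simpa [SimpleGraph.mem_neighborFinset] using hu.1)), hv⟩ with h | h
    · rw [h, zero_smul]
    · rw [h]
      simp [Matrix.mulVec_zero]
  rw [← split, h2, add_zero]
  refine Finset.sum_congr rfl fun u hu => ?_
  simp only [Finset.mem_filter] at hu
  rw [hmS u hu.2, one_smul, ih u hu.2]
end
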